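/- Let T ≥ 1, m = n = T + ⌊T/2⌋, U = U_M, and let P be the m×n matrix with P i j = 1 if i = j ≤ T and P i j = 0 otherwise (Team 1 has T ordinary players, player i beating only opponent i, plus ⌊T/2⌋ dominated players with all-zero rows; Team 2 has ⌊T/2⌋ extra players who beat every opponent). Then V(G(T,P,U_M)) > −1; i.e., with ⌊T/2⌋ dominated players recruited, Team 1 has positive probability of winning at least ⌈T/2⌉ rounds under optimal play. -/

import Mathlib

/-- Value function of the team competition `G(T,P,U)`, by backward induction.
`gval m n P U r X Y w` is the value of the state where the players in `X` (Team 1)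
and `Y` (Team 2) have already played, Team 1 has won `w` rounds so far, and
`r = T - |X|` rounds remain to be played.  The value of the whole game is
`gval m n P U T ∅ ∅ 0`. -/
noncomputable def gval (m n : ℕ) (P : Fin m → Fin n → ℝ) (U : ℕ → ℝ) :
    ℕ → Finset (Fin m) → Finset (Fin n) → ℕ → ℝ
  | 0, _, _, w => U w
  | r + 1, X, Y, w =>
      sSup {v : ℝ | ∃ p : Fin m → ℝ,
        (∀ i, 0 ≤ p i) ∧ (∀ i ∈ X, p i = 0) ∧ (∑ i, p i) = 1 ∧
        v = sInf {u : ℝ | ∃ j, j ∉ Y ∧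
          u = ∑ i, p i *
            (P i j * gval m n P U r (insert i X) (insert j Y) (w + 1) +
             (1 - P i j) * gval m n P U r (insert i X) (insert j Y) w)}}

/-- The utility function `U_M(t)`: `1` if `t > T/2`, `0` if `t = T/2`, `-1` if `t < T/2`. -/
def UM (T : ℕ) : ℕ → ℝ := fun t => if T < 2 * t then 1 else if 2 * t = T then 0 else -1

/-!
Team 1 plays uniformly at random among its unused players, and the value is bounded below by
the payoff of this strategy against Team 2's best reply. Whatever opponent `j` Team 2 fields,
Team 1 has an unused player that keeps the invariant `IsBalanced`: if `j` is ordinary, Team 1's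
player `j` beats it; if `j` is one of the extra players, Team 1 still has a dominated player
left, because both teams have spent equally many of their `k ≤ T / 2` non-ordinary players. Since this
player is fielded with positive probability, and all payoffs are at least `-1`, the value stays
strictly above `-1` down to the final state, where Team 1 has won at least `T - k ≥ T / 2`
rounds.
-/

open Finset

section RealBounds

variable {s : Set ℝ} {a b : ℝ}

-- The hypotheses `a ≤ 0 ≤ b` account for `sSup ∅ = sInf ∅ = 0`.
lemma Real.sSup_mem_Icc_of_subset (hs : s ⊆ Set.Icc a b) (ha : a ≤ 0) (hb : 0 ≤ b) :
    sSup s ∈ Set.Icc a b := by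
  rcases s.eq_empty_or_nonempty with rfl | ⟨x, hx⟩
  · simpa using ⟨ha, hb⟩
  · exact ⟨(hs hx).1.trans (le_csSup ⟨b, fun y hy => (hs hy).2⟩ hx),
      Real.sSup_le (fun y hy => (hs hy).2) hb⟩

lemma Real.sInf_mem_Icc_of_subset (hs : s ⊆ Set.Icc a b) (ha : a ≤ 0) (hb : 0 ≤ b) :
    sInf s ∈ Set.Icc a b := by
  rcases s.eq_empty_or_nonempty with rfl | ⟨x, hx⟩
  · simpa using ⟨ha, hb⟩
  · exact ⟨Real.le_sInf (fun y hy => (hs hy).1) ha,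
      (csInf_le ⟨a, fun y hy => (hs hy).1⟩ hx).trans (hs hx).2⟩

lemma Real.lt_sInf_of_finite (hs : s.Finite) (ha : a < 0) (h : ∀ x ∈ s, a < x) :
    a < sInf s := by
  rcases s.eq_empty_or_nonempty with rfl | hne
  · simpa using ha
  · exact (hs.lt_csInf_iff hne).2 h

end RealBounds

lemma lt_sum_mul_of_lt {ι : Type*} {s : Finset ι} {p c : ι → ℝ} {a : ℝ} {i₀ : ι}
    (hp : ∀ i ∈ s, 0 ≤ p i) (hp₁ : ∑ i ∈ s, p i = 1) (hc : ∀ i ∈ s, a ≤ c i)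
    (hi₀ : i₀ ∈ s) (hpi₀ : 0 < p i₀) (hci₀ : a < c i₀) :
    a < ∑ i ∈ s, p i * c i :=
  calc a = ∑ i ∈ s, p i * a := by rw [← sum_mul, hp₁, one_mul]
    _ < ∑ i ∈ s, p i * c i :=
      sum_lt_sum (fun i hi => mul_le_mul_of_nonneg_left (hc i hi) (hp i hi))
        ⟨i₀, hi₀, mul_lt_mul_of_pos_left hci₀ hpi₀⟩

section UniformStrategy

variable {m : ℕ} (X : Finset (Fin m))

noncomputable def uniformOffStrategy : Fin m → ℝ := fun i => if i ∈ X then 0 else (#Xᶜ : ℝ)⁻¹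

variable {X}

lemma uniformOffStrategy_nonneg (i : Fin m) : 0 ≤ uniformOffStrategy X i := by
  unfold uniformOffStrategy; split_ifs <;> positivity

lemma uniformOffStrategy_of_mem {i : Fin m} (hi : i ∈ X) : uniformOffStrategy X i = 0 :=
  if_pos hi

lemma uniformOffStrategy_pos {i : Fin m} (hi : i ∉ X) : 0 < uniformOffStrategy X i := by
  rw [uniformOffStrategy, if_neg hi, inv_pos, Nat.cast_pos, card_pos]
  exact ⟨i, mem_compl.2 hi⟩

lemma sum_uniformOffStrategy (hX : Xᶜ.Nonempty) : ∑ i, uniformOffStrategy X i = 1 := by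
  have hXc : ∀ i ∈ Xᶜ, uniformOffStrategy X i = (#Xᶜ : ℝ)⁻¹ := fun i hi =>
    if_neg (mem_compl.1 hi)
  rw [← sum_compl_add_sum X, sum_congr rfl fun i hi => uniformOffStrategy_of_mem hi,
    sum_congr rfl hXc, sum_const, nsmul_eq_mul,
    mul_inv_cancel₀ (by exact_mod_cast hX.card_pos.ne'), sum_const_zero, add_zero]

end UniformStrategy

section GameValue

variable {m n : ℕ} (P : Fin m → Fin n → ℝ) (U : ℕ → ℝ)

noncomputable def matchValue (r : ℕ) (X : Finset (Fin m)) (Y : Finset (Fin n)) (w : ℕ)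
    (i : Fin m) (j : Fin n) : ℝ :=
  P i j * gval m n P U r (insert i X) (insert j Y) (w + 1) +
    (1 - P i j) * gval m n P U r (insert i X) (insert j Y) w

noncomputable def securityLevel (r : ℕ) (X : Finset (Fin m)) (Y : Finset (Fin n)) (w : ℕ)
    (p : Fin m → ℝ) : ℝ :=
  sInf {u : ℝ | ∃ j, j ∉ Y ∧ u = ∑ i, p i * matchValue P U r X Y w i j}

lemma gval_succ (r : ℕ) (X : Finset (Fin m)) (Y : Finset (Fin n)) (w : ℕ) :
    gval m n P U (r + 1) X Y w = sSup {v : ℝ | ∃ p : Fin m → ℝ,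
      (∀ i, 0 ≤ p i) ∧ (∀ i ∈ X, p i = 0) ∧ (∑ i, p i) = 1 ∧ v = securityLevel P U r X Y w p} := by
  rw [gval]; rfl

variable {P U} {r : ℕ} {X : Finset (Fin m)} {Y : Finset (Fin n)} {w : ℕ}

lemma matchValue_of_eq_one {i : Fin m} {j : Fin n} (h : P i j = 1) :
    matchValue P U r X Y w i j = gval m n P U r (insert i X) (insert j Y) (w + 1) := by
  simp [matchValue, h]

lemma matchValue_of_eq_zero {i : Fin m} {j : Fin n} (h : P i j = 0) :
    matchValue P U r X Y w i j = gval m n P U r (insert i X) (insert j Y) w := by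
  simp [matchValue, h]

variable {a b : ℝ} (hP : ∀ i j, P i j ∈ Set.Icc (0 : ℝ) 1)
include hP

lemma matchValue_mem_Icc (hr : ∀ X Y w, gval m n P U r X Y w ∈ Set.Icc a b)
    (i : Fin m) (j : Fin n) :
    matchValue P U r X Y w i j ∈ Set.Icc a b :=
  convex_Icc a b (hr _ _ _) (hr _ _ _) (hP i j).1 (sub_nonneg.2 (hP i j).2) (by ring)

lemma securityLevel_mem_Icc (ha : a ≤ 0) (hb : 0 ≤ b)
    (hr : ∀ X Y w, gval m n P U r X Y w ∈ Set.Icc a b) {p : Fin m → ℝ}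
    (hp : ∀ i, 0 ≤ p i) (hp₁ : ∑ i, p i = 1) :
    securityLevel P U r X Y w p ∈ Set.Icc a b := by
  refine Real.sInf_mem_Icc_of_subset ?_ ha hb
  rintro _ ⟨j, -, rfl⟩
  exact (convex_Icc a b).sum_mem (fun i _ => hp i) hp₁
    fun i _ => matchValue_mem_Icc hP hr i j

theorem gval_mem_Icc (hU : ∀ t, U t ∈ Set.Icc a b) (ha : a ≤ 0) (hb : 0 ≤ b) (r : ℕ) :
    ∀ X Y w, gval m n P U r X Y w ∈ Set.Icc a b := by
  induction r with
  | zero => intro X Y w; exact hU w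
  | succ r ih =>
    intro X Y w
    rw [gval_succ]
    refine Real.sSup_mem_Icc_of_subset ?_ ha hb
    rintro _ ⟨p, hp, -, hp₁, rfl⟩
    exact securityLevel_mem_Icc hP ha hb ih hp hp₁

lemma securityLevel_le_gval_succ (hU : ∀ t, U t ∈ Set.Icc a b) (ha : a ≤ 0) (hb : 0 ≤ b)
    {p : Fin m → ℝ}
    (hp : ∀ i, 0 ≤ p i) (hpX : ∀ i ∈ X, p i = 0) (hp₁ : ∑ i, p i = 1) :
    securityLevel P U r X Y w p ≤ gval m n P U (r + 1) X Y w := by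
  rw [gval_succ]
  refine le_csSup ⟨b, ?_⟩ ⟨p, hp, hpX, hp₁, rfl⟩
  rintro _ ⟨q, hq, -, hq₁, rfl⟩
  exact (securityLevel_mem_Icc hP ha hb (gval_mem_Icc hP hU ha hb r) hq hq₁).2

lemma lt_securityLevel (hU : ∀ t, U t ∈ Set.Icc a b) (ha : a < 0) (hb : 0 ≤ b)
    {p : Fin m → ℝ}
    (hp : ∀ i, 0 ≤ p i) (hp₁ : ∑ i, p i = 1)
    (h : ∀ j ∉ Y, ∃ i, 0 < p i ∧ a < matchValue P U r X Y w i j) :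
    a < securityLevel P U r X Y w p := by
  refine Real.lt_sInf_of_finite ((Set.finite_range fun j =>
    ∑ i, p i * matchValue P U r X Y w i j).subset ?_) ha ?_
  · rintro _ ⟨j, -, rfl⟩
    exact ⟨j, rfl⟩
  · rintro _ ⟨j, hj, rfl⟩
    obtain ⟨i, hpi, hi⟩ := h j hj
    exact lt_sum_mul_of_lt (fun i _ => hp i) hp₁
      (fun i _ => (matchValue_mem_Icc hP (gval_mem_Icc hP hU ha.le hb r) i j).1)
      (mem_univ i) hpi hi

theorem lt_gval_succ_of_forall_exists (hU : ∀ t, U t ∈ Set.Icc a b) (ha : a < 0)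
    (hb : 0 ≤ b) (hX : Xᶜ.Nonempty)
    (h : ∀ j ∉ Y, ∃ i ∉ X, a < matchValue P U r X Y w i j) :
    a < gval m n P U (r + 1) X Y w := by
  have hlt : a < securityLevel P U r X Y w (uniformOffStrategy X) := by
    refine lt_securityLevel hP hU ha hb uniformOffStrategy_nonneg (sum_uniformOffStrategy hX) ?_
    intro j hj
    obtain ⟨i, hi, hij⟩ := h j hj
    exact ⟨i, uniformOffStrategy_pos hi, hij⟩
  exact hlt.trans_le (securityLevel_le_gval_succ hP hU ha.le hb uniformOffStrategy_nonneg
    (fun i => uniformOffStrategy_of_mem) (sum_uniformOffStrategy hX))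

end GameValue

lemma UM_mem_Icc (T t : ℕ) : UM T t ∈ Set.Icc (-1 : ℝ) 1 := by
  unfold UM; split_ifs <;> norm_num

lemma UM_nonneg {T t : ℕ} (h : T ≤ 2 * t) : 0 ≤ UM T t := by
  unfold UM; split_ifs <;> norm_num; omega

section DuelGame

variable {T k : ℕ}

/-- Players `0, …, T - 1` of both teams are ordinary: each beats only its namesake. The other
`k` players of Team 1 are dominated, and the other `k` players of Team 2 beat everyone. -/
noncomputable def duelMatrix (T k : ℕ) : Fin (T + k) → Fin (T + k) → ℝ :=
  fun i j => if (i : ℕ) = (j : ℕ) ∧ (i : ℕ) < T then 1 else 0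

lemma duelMatrix_mem_Icc (i j : Fin (T + k)) : duelMatrix T k i j ∈ Set.Icc (0 : ℝ) 1 := by
  unfold duelMatrix; split_ifs <;> norm_num

lemma card_filter_univ_not_val_lt : #{i : Fin (T + k) | ¬ i.val < T} = k := by
  have := card_filter_add_card_filter_not (s := univ) fun i : Fin (T + k) => i.val < T
  rw [Fin.card_filter_val_lt, card_univ, Fintype.card_fin] at this
  omega

lemma card_filter_not_val_lt_le (X : Finset (Fin (T + k))) : #{i ∈ X | ¬ i.val < T} ≤ k :=
  (card_le_card (filter_subset_filter _ (subset_univ X))).trans_eq card_filter_univ_not_val_lt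

/-- Team 1 has met every ordinary opponent played so far with its namesake and every extra
opponent with a dominated player, and `w` counts its wins. -/
def IsBalanced (T : ℕ) (X Y : Finset (Fin (T + k))) (w : ℕ) : Prop :=
  #X = #Y ∧ {i ∈ X | i.val < T} = {j ∈ Y | j.val < T} ∧ w = #{i ∈ X | i.val < T}

variable {X Y : Finset (Fin (T + k))} {w : ℕ} {i j : Fin (T + k)}

lemma IsBalanced.insert_ordinary (h : IsBalanced T X Y w) (hjY : j ∉ Y) (hj : j.val < T) :
    j ∉ X ∧ IsBalanced T (insert j X) (insert j Y) (w + 1) := by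
  obtain ⟨hcard, hord, hw⟩ := h
  have hjX : j ∉ X := fun hjX =>
    hjY (mem_filter.1 (hord ▸ mem_filter.2 ⟨hjX, hj⟩ : j ∈ {j ∈ Y | j.val < T})).1
  refine ⟨hjX, ?_, ?_, ?_⟩
  · rw [card_insert_of_notMem hjX, card_insert_of_notMem hjY, hcard]
  · rw [filter_insert, filter_insert, if_pos hj, if_pos hj, hord]
  · rw [filter_insert, if_pos hj, card_insert_of_notMem fun h => hjX (mem_filter.1 h).1, hw]

lemma IsBalanced.insert_dominated (h : IsBalanced T X Y w) (hiX : i ∉ X) (hi : ¬ i.val < T)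
    (hjY : j ∉ Y) (hj : ¬ j.val < T) : IsBalanced T (insert i X) (insert j Y) w := by
  obtain ⟨hcard, hord, hw⟩ := h
  refine ⟨?_, ?_, ?_⟩
  · rw [card_insert_of_notMem hiX, card_insert_of_notMem hjY, hcard]
  · rw [filter_insert, filter_insert, if_neg hi, if_neg hj, hord]
  · rw [filter_insert, if_neg hi, hw]

lemma IsBalanced.exists_dominated_notMem (h : IsBalanced T X Y w) (hjY : j ∉ Y)
    (hj : ¬ j.val < T) : ∃ i ∉ X, ¬ i.val < T := by
  obtain ⟨hcard, hord, -⟩ := h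
  by_contra! hX
  have hall : ({i | ¬ i.val < T} : Finset (Fin (T + k))) ⊆ {i ∈ X | ¬ i.val < T} := fun i hi => by
    simp only [mem_filter, mem_univ, true_and] at hi ⊢
    exact ⟨by_contra fun hiX => hi (hX i hiX), hi⟩
  have hsplitX := card_filter_add_card_filter_not (s := X) fun i => i.val < T
  rw [hord] at hsplitX
  have hsplitY := card_filter_add_card_filter_not (s := Y) fun i => i.val < T
  have hY := card_filter_not_val_lt_le (insert j Y)
  rw [filter_insert, if_pos hj, card_insert_of_notMem fun h => hjY (mem_filter.1 h).1] at hY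
  have := card_le_card hall
  rw [card_filter_univ_not_val_lt] at this
  omega

lemma IsBalanced.le_two_mul (h : IsBalanced T X Y w) (hX : #X = T) (hk : 2 * k ≤ T) :
    T ≤ 2 * w := by
  have hsplit := card_filter_add_card_filter_not (s := X) fun i => i.val < T
  have := card_filter_not_val_lt_le X
  rw [← h.2.2] at hsplit
  omega

theorem neg_one_lt_gval_of_isBalanced (hk : 2 * k ≤ T) (r : ℕ) :
    ∀ X Y w, #X + r = T → IsBalanced T X Y w →
      -1 < gval (T + k) (T + k) (duelMatrix T k) (UM T) r X Y w := by
  induction r with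
  | zero =>
    intro X Y w hX h
    exact neg_one_lt_zero.trans_le (UM_nonneg (h.le_two_mul hX hk))
  | succ r ih =>
    intro X Y w hX h
    have hXc : Xᶜ.Nonempty := card_pos.1 (by rw [card_compl, Fintype.card_fin]; omega)
    refine lt_gval_succ_of_forall_exists duelMatrix_mem_Icc (UM_mem_Icc T) (by norm_num)
      zero_le_one hXc fun j hjY => ?_
    by_cases hj : j.val < T
    · obtain ⟨hjX, h'⟩ := h.insert_ordinary hjY hj
      refine ⟨j, hjX, ?_⟩
      rw [matchValue_of_eq_one (by simp [duelMatrix, hj])]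
      exact ih _ _ _ (by rw [card_insert_of_notMem hjX]; omega) h'
    · obtain ⟨i, hiX, hi⟩ := h.exists_dominated_notMem hjY hj
      refine ⟨i, hiX, ?_⟩
      rw [matchValue_of_eq_zero (by simp [duelMatrix, hi])]
      exact ih _ _ _ (by rw [card_insert_of_notMem hiX]; omega)
        (h.insert_dominated hiX hi hjY hj)

end DuelGame

theorem enough_dominated_players_help_UM_general (T : ℕ) :
    gval (T + T / 2) (T + T / 2)
      (fun i j => if (i : ℕ) = (j : ℕ) ∧ (i : ℕ) < T then (1 : ℝ) else 0)
      (UM T) T ∅ ∅ 0 > -1 :=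
  neg_one_lt_gval_of_isBalanced (Nat.mul_div_le T 2) T ∅ ∅ 0 (by simp) ⟨rfl, rfl, by simp⟩

/-- Let `T ≥ 1`, `m = n = T + ⌊T/2⌋`, `U = U_M`, and let
`P i j = 1` iff `i = j ≤ T` (Team 1 has `T` ordinary players plus `⌊T/2⌋` dominated
ones; Team 2 has `⌊T/2⌋` extra invincible players).  Then the value is `> -1`: with
`⌊T/2⌋` dominated players recruited, Team 1 has positive probability of winning at
least `⌈T/2⌉` rounds under optimal play. -/
theorem enough_dominated_players_help_UM (T : ℕ) (hT : 1 ≤ T) :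
    gval (T + T / 2) (T + T / 2)
      (fun i j => if (i : ℕ) = (j : ℕ) ∧ (i : ℕ) < T then (1 : ℝ) else 0)
      (UM T) T ∅ ∅ 0 > -1 :=
  enough_dominated_players_help_UM_general T
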